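/- Let d > 0 and let P₁, P₂, Q be edge sets with differentiable, non-decreasing, positive edge cost functions, such that τ'_{P₁∩Q}(x) ≤ τ'_{P₂∩Q}(x) on [0,d]. Then for any x₁, x₂ ∈ [0,d] with x₁ ≥ x₂: τ_{Q\P₁}(d - x₁) + τ_{P₁∩Q}(d) ≤ τ_{Q\P₂}(d - x₂) + τ_{P₂∩Q}(d). -/

import Mathlib

/-!
Write `τ_S(x) = ∑_{e ∈ S} τ_e(x)` and split `τ_Q = τ_{Q\P} + τ_{P∩Q}`. The left side is then
`τ_Q(d - x₁)` plus the growth `τ_{P₁∩Q}(d) - τ_{P₁∩Q}(d - x₁)`, which the derivative comparison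
bounds by the growth of `τ_{P₂∩Q}` over the same interval; this yields the right side at `x₁`, and
since `d - x₁ ≤ d - x₂`, monotonicity of `τ_{Q\P₂}` finishes.
-/

open Finset Set

theorem monotoneOn_sub_of_deriv_le {D : Set ℝ} (hD : Convex ℝ D) {f g : ℝ → ℝ}
    (hf : Differentiable ℝ f) (hg : Differentiable ℝ g)
    (hfg : ∀ x ∈ interior D, deriv f x ≤ deriv g x) :
    MonotoneOn (fun x => g x - f x) D := by
  have hdiff : Differentiable ℝ fun x => g x - f x := hg.sub hf
  refine monotoneOn_of_deriv_nonneg hD hdiff.continuous.continuousOn hdiff.differentiableOn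
    fun x hx => ?_
  rw [deriv_fun_sub (hg x) (hf x), sub_nonneg]
  exact hfg x hx

theorem stmt_14_general {E : Type*} [DecidableEq E] (d : ℝ)
    (P₁ P₂ Q : Finset E) (τ : E → ℝ → ℝ)
    (hdiff : ∀ e : E, Differentiable ℝ (τ e))
    (hmono : ∀ e : E, MonotoneOn (τ e) (Set.Icc 0 d))
    (hdom₂ : ∀ x ∈ Set.Icc (0 : ℝ) d,
      (∑ e ∈ P₁ ∩ Q, deriv (τ e) x) ≤ ∑ e ∈ P₂ ∩ Q, deriv (τ e) x)
    (x₁ x₂ : ℝ) (hx₁ : x₁ ∈ Set.Icc (0 : ℝ) d) (hx₂ : x₂ ∈ Set.Icc (0 : ℝ) d)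
    (hge : x₁ ≥ x₂) :
    (∑ e ∈ Q \ P₁, τ e (d - x₁)) + (∑ e ∈ P₁ ∩ Q, τ e d) ≤
      (∑ e ∈ Q \ P₂, τ e (d - x₂)) + (∑ e ∈ P₂ ∩ Q, τ e d) := by
  obtain ⟨hx₁0, hx₁d⟩ := hx₁
  obtain ⟨hx₂0, hx₂d⟩ := hx₂
  have hy₁ : d - x₁ ∈ Icc 0 d := ⟨sub_nonneg.2 hx₁d, sub_le_self d hx₁0⟩
  have hy₂ : d - x₂ ∈ Icc 0 d := ⟨sub_nonneg.2 hx₂d, sub_le_self d hx₂0⟩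
  have hsum_diff (S : Finset E) : Differentiable ℝ fun x => ∑ e ∈ S, τ e x :=
    Differentiable.fun_sum fun e _ => hdiff e
  have hgap : MonotoneOn (fun x => ∑ e ∈ P₂ ∩ Q, τ e x - ∑ e ∈ P₁ ∩ Q, τ e x) (Icc 0 d) :=
    monotoneOn_sub_of_deriv_le (convex_Icc 0 d) (hsum_diff _) (hsum_diff _) fun x hx => by
      rw [deriv_fun_sum fun e _ => hdiff e x, deriv_fun_sum fun e _ => hdiff e x]
      exact hdom₂ x (interior_subset hx)
  have hgrowth := hgap hy₁ ⟨hx₁0.trans hx₁d, le_rfl⟩ (sub_le_self d hx₁0)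
  have hQP₂ : ∑ e ∈ Q \ P₂, τ e (d - x₁) ≤ ∑ e ∈ Q \ P₂, τ e (d - x₂) :=
    sum_le_sum fun e _ => hmono e hy₁ hy₂ (by linarith)
  have hsplit (P : Finset E) (y : ℝ) := sum_inter_add_sum_sdiff Q P (τ · y)
  rw [inter_comm P₁ Q, inter_comm P₂ Q] at *
  linarith [hsplit P₁ (d - x₁), hsplit P₂ (d - x₁)]

/-- Core inequality (2): if `τ'_{P₁∩Q} ≤ τ'_{P₂∩Q}` on `[0,d]`, then for
`x₁ ≥ x₂` in `[0,d]`,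
`τ_{Q\P₁}(d - x₁) + τ_{P₁∩Q}(d) ≤ τ_{Q\P₂}(d - x₂) + τ_{P₂∩Q}(d)`. -/
theorem stmt_14 {E : Type*} [DecidableEq E] (d : ℝ) (hd : 0 < d)
    (P₁ P₂ Q : Finset E) (τ : E → ℝ → ℝ)
    (hdiff : ∀ e : E, Differentiable ℝ (τ e))
    (hmono : ∀ e : E, MonotoneOn (τ e) (Set.Icc 0 d))
    (hpos : ∀ e : E, ∀ x ∈ Set.Icc (0 : ℝ) d, 0 < τ e x)
    (hdom₂ : ∀ x ∈ Set.Icc (0 : ℝ) d,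
      (∑ e ∈ P₁ ∩ Q, deriv (τ e) x) ≤ ∑ e ∈ P₂ ∩ Q, deriv (τ e) x)
    (x₁ x₂ : ℝ) (hx₁ : x₁ ∈ Set.Icc (0 : ℝ) d) (hx₂ : x₂ ∈ Set.Icc (0 : ℝ) d)
    (hge : x₁ ≥ x₂) :
    (∑ e ∈ Q \ P₁, τ e (d - x₁)) + (∑ e ∈ P₁ ∩ Q, τ e d) ≤
      (∑ e ∈ Q \ P₂, τ e (d - x₂)) + (∑ e ∈ P₂ ∩ Q, τ e d) :=
  stmt_14_general d P₁ P₂ Q τ hdiff hmono hdom₂ x₁ x₂ hx₁ hx₂ hge
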